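/- arXiv:1110.0274 — 7 statements merged into one kernel-verified Lean document; each statement's English description precedes it below -/
import Mathlib

section
/- Let S ∈ SO(3), Λ_A = diag(λ1, λ2, λ3), Λ_B = diag(λ1', λ2', λ3'), A = S Λ_A S^T, B = S Λ_B S^T. Then the antisymmetric part of A x_× B equals (1/2)(C x)_× where C = S Λ_C S^T with Λ_C = diag(λ2 λ3' + λ2' λ3, λ1 λ3' + λ1' λ3, λ1 λ2' + λ1' λ2). -/
open Matrix

/-- The cross-product matrix (cross operator) of a vector in ℝ³. -/
noncomputable def crossMat (x : Fin 3 → ℝ) : Matrix (Fin 3) (Fin 3) ℝ :=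
  !![0, -x 2, x 1; x 2, 0, -x 0; -x 1, x 0, 0]

lemma cross_conj (S : Matrix (Fin 3) (Fin 3) ℝ) (hS : S * Sᵀ = 1) (hdet : S.det = 1)
    (v : Fin 3 → ℝ) : crossMat (S.mulVec v) = S * crossMat v * Sᵀ := by
  have hinv : S⁻¹ = Sᵀ := Matrix.inv_eq_right_inv hS
  have hadj : Sᵀ = adjugate S := by
    rw [← hinv, Matrix.inv_def, hdet]; simp
  rw [Matrix.adjugate_fin_three] at hadj
  have E : ∀ b a : Fin 3, (Sᵀ) b a =
      (!![S 1 1 * S 2 2 - S 1 2 * S 2 1,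
      -(S 0 1 * S 2 2) + S 0 2 * S 2 1,
      S 0 1 * S 1 2 - S 0 2 * S 1 1;
      -(S 1 0 * S 2 2) + S 1 2 * S 2 0,
      S 0 0 * S 2 2 - S 0 2 * S 2 0,
      -(S 0 0 * S 1 2) + S 0 2 * S 1 0;
      S 1 0 * S 2 1 - S 1 1 * S 2 0,
      -(S 0 0 * S 2 1) + S 0 1 * S 2 0,
      S 0 0 * S 1 1 - S 0 1 * S 1 0]) b a := fun b a => by rw [hadj]
  have e00 : S 0 0 = S 1 1 * S 2 2 - S 1 2 * S 2 1 := by simpa using E 0 0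
  have e01 : S 0 1 = -(S 1 0 * S 2 2) + S 1 2 * S 2 0 := by simpa using E 1 0
  have e02 : S 0 2 = S 1 0 * S 2 1 - S 1 1 * S 2 0 := by simpa using E 2 0
  have e10 : S 1 0 = -(S 0 1 * S 2 2) + S 0 2 * S 2 1 := by simpa using E 0 1
  have e11 : S 1 1 = S 0 0 * S 2 2 - S 0 2 * S 2 0 := by simpa using E 1 1
  have e12 : S 1 2 = -(S 0 0 * S 2 1) + S 0 1 * S 2 0 := by simpa using E 2 1
  have e20 : S 2 0 = S 0 1 * S 1 2 - S 0 2 * S 1 1 := by simpa using E 0 2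
  have e21 : S 2 1 = -(S 0 0 * S 1 2) + S 0 2 * S 1 0 := by simpa using E 1 2
  have e22 : S 2 2 = S 0 0 * S 1 1 - S 0 1 * S 1 0 := by simpa using E 2 2
  ext i j
  fin_cases i <;> fin_cases j <;>
    simp [crossMat, Matrix.mul_apply, Matrix.mulVec, dotProduct,
      Fin.sum_univ_three, Matrix.transpose_apply]
  · ring
  · linear_combination (-(v 0)) * e20 + (-(v 1)) * e21 + (-(v 2)) * e22
  · linear_combination (v 0) * e10 + (v 1) * e11 + (v 2) * e12
  · linear_combination (v 0) * e20 + (v 1) * e21 + (v 2) * e22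
  · ring
  · linear_combination (-(v 0)) * e00 + (-(v 1)) * e01 + (-(v 2)) * e02
  · linear_combination (-(v 0)) * e10 + (-(v 1)) * e11 + (-(v 2)) * e12
  · linear_combination (v 0) * e00 + (v 1) * e01 + (v 2) * e02
  · ring

lemma diag_cross (l l' y : Fin 3 → ℝ) :
    diagonal l * crossMat y * diagonal l' - (diagonal l * crossMat y * diagonal l')ᵀ
      = crossMat ((diagonal ![l 1 * l' 2 + l' 1 * l 2,
          l 0 * l' 2 + l' 0 * l 2, l 0 * l' 1 + l' 0 * l 1]).mulVec y) := by
  ext i j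
  simp only [Matrix.sub_apply, Matrix.transpose_apply, Matrix.mul_apply,
    Fin.sum_univ_three, Matrix.mulVec, dotProduct]
  fin_cases i <;> fin_cases j <;>
    simp [crossMat, Matrix.diagonal, Matrix.mulVec, dotProduct, Fin.sum_univ_three,
      Matrix.of_apply] <;> ring

theorem stmt_5 (S : Matrix (Fin 3) (Fin 3) ℝ) (hS : S * Sᵀ = 1) (hdet : S.det = 1)
    (l l' : Fin 3 → ℝ) (x : Fin 3 → ℝ)
    (A B C : Matrix (Fin 3) (Fin 3) ℝ)
    (hA : A = S * diagonal l * Sᵀ)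
    (hB : B = S * diagonal l' * Sᵀ)
    (hC : C = S * diagonal ![l 1 * l' 2 + l' 1 * l 2,
                             l 0 * l' 2 + l' 0 * l 2,
                             l 0 * l' 1 + l' 0 * l 1] * Sᵀ) :
    (1/2 : ℝ) • (A * crossMat x * B - (A * crossMat x * B)ᵀ)
      = (1/2 : ℝ) • crossMat (C.mulVec x) := by
  have hSt : Sᵀ * S = 1 := mul_eq_one_comm.mp hS
  set y := Sᵀ.mulVec x with hy
  have cross_conjT : Sᵀ * crossMat x * S = crossMat y := by
    have h := cross_conj Sᵀ (by rwa [Matrix.transpose_transpose]) (by rwa [Matrix.det_transpose]) x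
    rw [Matrix.transpose_transpose] at h
    exact h.symm
  set D := diagonal l * crossMat y * diagonal l' with hD
  have key : A * crossMat x * B = S * D * Sᵀ := by
    rw [hA, hB, hD, ← cross_conjT]
    simp only [Matrix.mul_assoc]
  rw [key]
  congr 1
  have ht : (S * D * Sᵀ)ᵀ = S * Dᵀ * Sᵀ := by
    rw [Matrix.transpose_mul, Matrix.transpose_mul, Matrix.transpose_transpose,
      Matrix.mul_assoc]
  rw [ht]
  have : S * D * Sᵀ - S * Dᵀ * Sᵀ = S * (D - Dᵀ) * Sᵀ := by
    rw [Matrix.mul_sub, Matrix.sub_mul, Matrix.mul_assoc, Matrix.mul_assoc]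
  rw [this, diag_cross l l' y, ← cross_conj S hS hdet, hC, hy]
  rw [← Matrix.mulVec_mulVec, ← Matrix.mulVec_mulVec]
end

section
/- Let A = S Λ S^T where S ∈ SO(3) and Λ = diag(λ1, λ2, λ3). Then for any x ∈ R^3, A x_× A = (D x)_× where D = S diag(λ2 λ3, λ1 λ3, λ1 λ2) S^T. -/
open Matrix

/-- Polynomial identity: conjugating the cross matrix of `M.mulVec x` by `Mᵀ`
gives `det M` times the cross matrix of `x`. Holds for all `M`. -/
lemma crossMat_key (M : Matrix (Fin 3) (Fin 3) ℝ) (x : Fin 3 → ℝ) :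
    Mᵀ * !![0, -(M.mulVec x) 2, (M.mulVec x) 1; (M.mulVec x) 2, 0, -(M.mulVec x) 0;
      -(M.mulVec x) 1, (M.mulVec x) 0, 0] * M
      = M.det • !![0, -x 2, x 1; x 2, 0, -x 0; -x 1, x 0, 0] := by
  ext i j
  fin_cases i <;> fin_cases j <;>
    simp [Matrix.mul_apply, Matrix.mulVec, Matrix.det_fin_three,
      Fin.sum_univ_succ, dotProduct] <;> ring

lemma crossMat_conj (R : Matrix (Fin 3) (Fin 3) ℝ) (h1 : R * Rᵀ = 1) (hd : R.det = 1)
    (x : Fin 3 → ℝ) : R * crossMat x * Rᵀ = crossMat (R.mulVec x) := by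
  have this : Rᵀ * crossMat (R.mulVec x) * R = crossMat x := by
    have := crossMat_key R x
    rw [hd, one_smul] at this
    simpa [crossMat] using this
  calc R * crossMat x * Rᵀ = R * (Rᵀ * crossMat (R.mulVec x) * R) * Rᵀ := by rw [this]
    _ = (R * Rᵀ) * crossMat (R.mulVec x) * (R * Rᵀ) := by noncomm_ring
    _ = crossMat (R.mulVec x) := by rw [h1]; simp

lemma crossMat_diag (l : Fin 3 → ℝ) (x : Fin 3 → ℝ) :
    diagonal l * crossMat x * diagonal l
      = crossMat ((diagonal ![l 1 * l 2, l 0 * l 2, l 0 * l 1]).mulVec x) := by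
  ext i j
  fin_cases i <;> fin_cases j <;>
    simp [crossMat, Matrix.mul_apply, Matrix.mulVec, Matrix.diagonal,
      Fin.sum_univ_succ, dotProduct] <;> ring

theorem stmt_6 (S : Matrix (Fin 3) (Fin 3) ℝ) (hS : S * Sᵀ = 1) (hdet : S.det = 1)
    (l : Fin 3 → ℝ) (x : Fin 3 → ℝ)
    (A D : Matrix (Fin 3) (Fin 3) ℝ)
    (hA : A = S * diagonal l * Sᵀ)
    (hD : D = S * diagonal ![l 1 * l 2, l 0 * l 2, l 0 * l 1] * Sᵀ) :
    A * crossMat x * A = crossMat (D.mulVec x) := by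
  have hT1 : Sᵀ * Sᵀᵀ = 1 := by rw [transpose_transpose]; exact mul_eq_one_comm.mp hS
  have hTdet : Sᵀ.det = 1 := by rw [Matrix.det_transpose, hdet]
  have h1 : Sᵀ * crossMat x * S = crossMat (Sᵀ.mulVec x) := by
    have := crossMat_conj Sᵀ hT1 hTdet x
    rwa [transpose_transpose] at this
  calc A * crossMat x * A
      = S * (diagonal l * (Sᵀ * crossMat x * S) * diagonal l) * Sᵀ := by
        rw [hA]; noncomm_ring
    _ = S * crossMat ((diagonal ![l 1 * l 2, l 0 * l 2, l 0 * l 1]).mulVec (Sᵀ.mulVec x)) * Sᵀ := by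
        rw [h1, crossMat_diag]
    _ = crossMat (S.mulVec ((diagonal ![l 1 * l 2, l 0 * l 2, l 0 * l 1]).mulVec (Sᵀ.mulVec x))) := by
        rw [crossMat_conj S hS hdet]
    _ = crossMat (D.mulVec x) := by
        rw [hD, ← Matrix.mulVec_mulVec, ← Matrix.mulVec_mulVec]
end

section
/- Let Q be a symmetric positive definite (or negative definite) 3×3 matrix and X an arbitrary 3×3 matrix. Then tr(Q Pa(X) Q^T Pa(X)) ≤ 0, where Pa(X) = (X - X^T)/2. -/
open Matrix

theorem Matrix.trace_mul_self_nonpos_of_transpose_eq_neg {n : Type*} [Fintype n]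
    {M : Matrix n n ℝ} (hM : Mᵀ = -M) : (M * M).trace ≤ 0 := by
  have h := (posSemidef_conjTranspose_mul_self M).trace_nonneg
  rwa [conjTranspose_eq_transpose_of_trivial, hM, Matrix.neg_mul, trace_neg, neg_nonneg] at h

open scoped MatrixOrder in
/-- Writing `P = S * S` with `S` symmetric, the trace is that of `B * B` for the
skew-symmetric `B = S * A * S`. -/
theorem Matrix.PosSemidef.trace_mul_mul_mul_nonpos_of_transpose_eq_neg {n : Type*} [Fintype n]
    [DecidableEq n] {P A : Matrix n n ℝ} (hP : P.PosSemidef) (hA : Aᵀ = -A) :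
    (P * A * P * A).trace ≤ 0 := by
  set S := CFC.sqrt P
  have hSS : S * S = P := CFC.sqrt_mul_sqrt_self P hP.nonneg
  have hS : Sᵀ = S := by
    simpa only [conjTranspose_eq_transpose_of_trivial] using
      (CFC.sqrt_nonneg P).posSemidef.isHermitian.eq
  have hB : (S * A * S)ᵀ = -(S * A * S) := by
    simp only [transpose_mul, hS, hA, Matrix.neg_mul, Matrix.mul_neg, Matrix.mul_assoc]
  calc (P * A * P * A).trace = (S * (S * A * S * S * A)).trace := by
        simp only [← hSS, Matrix.mul_assoc]
    _ = (S * A * S * (S * A * S)).trace := by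
        rw [trace_mul_comm]; simp only [Matrix.mul_assoc]
    _ ≤ 0 := trace_mul_self_nonpos_of_transpose_eq_neg hB

theorem stmt_8 (Q X : Matrix (Fin 3) (Fin 3) ℝ) (hsymm : Qᵀ = Q)
    (hdef : Q.PosDef ∨ (-Q).PosDef) :
    (Q * ((1/2 : ℝ) • (X - Xᵀ)) * Qᵀ * ((1/2 : ℝ) • (X - Xᵀ))).trace ≤ 0 := by
  set A := X - Xᵀ
  have hA : Aᵀ = -A := by rw [transpose_sub, transpose_transpose, neg_sub]
  have hQAQA : (Q * A * Q * A).trace ≤ 0 := by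
    rcases hdef with hQ | hQ
    · exact hQ.posSemidef.trace_mul_mul_mul_nonpos_of_transpose_eq_neg hA
    · simpa only [Matrix.neg_mul, Matrix.mul_neg, neg_neg] using
        hQ.posSemidef.trace_mul_mul_mul_nonpos_of_transpose_eq_neg hA
  have hscale : Q * ((1/2 : ℝ) • A) * Qᵀ * ((1/2 : ℝ) • A) = (1/4 : ℝ) • (Q * A * Q * A) := by
    rw [hsymm]
    simp only [Matrix.mul_smul, Matrix.smul_mul, smul_smul]
    norm_num
  rw [hscale, trace_smul, smul_eq_mul]
  exact mul_nonpos_of_nonneg_of_nonpos (by norm_num) hQAQA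
end

section
/- Let M be a symmetric positive semi-definite 3×3 matrix with three distinct eigenvalues, with spectral decomposition M = U Λ U^T for orthogonal U and diagonal Λ. Then for C ∈ SO(3), the antisymmetric part of C M is zero if and only if C = U D_i U^T for some i ∈ {0,1,2,3}, where D_0 = I, D_1 = diag(1,-1,-1), D_2 = diag(-1,1,-1), D_3 = diag(-1,-1,1). -/
open Matrix

/-- The four candidate equilibrium "sign" matrices. -/
noncomputable def Dmat : Fin 4 → Matrix (Fin 3) (Fin 3) ℝ
  | 0 => 1
  | 1 => diagonal ![1, -1, -1]
  | 2 => diagonal ![-1, 1, -1]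
  | 3 => diagonal ![-1, -1, 1]

theorem stmt_9 (M U : Matrix (Fin 3) (Fin 3) ℝ) (d : Fin 3 → ℝ)
    (hM : M.PosSemidef)
    (hU : U * Uᵀ = 1)
    (hdecomp : M = U * diagonal d * Uᵀ)
    (hdistinct : Function.Injective d)
    (C : Matrix (Fin 3) (Fin 3) ℝ) (hC : C * Cᵀ = 1) (hdet : C.det = 1) :
    (1/2 : ℝ) • (C * M - (C * M)ᵀ) = 0 ↔ ∃ i : Fin 4, C = U * Dmat i * Uᵀ := by
  have hU' : Uᵀ * U = 1 := mul_eq_one_comm.mp hU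
  have hC' : Cᵀ * C = 1 := mul_eq_one_comm.mp hC
  have can1 : ∀ X : Matrix (Fin 3) (Fin 3) ℝ, U * (Uᵀ * X) = X := fun X => by
    rw [← Matrix.mul_assoc, hU, Matrix.one_mul]
  have can2 : ∀ X : Matrix (Fin 3) (Fin 3) ℝ, Uᵀ * (U * X) = X := fun X => by
    rw [← Matrix.mul_assoc, hU', Matrix.one_mul]
  have can3 : ∀ X : Matrix (Fin 3) (Fin 3) ℝ, C * (Cᵀ * X) = X := fun X => by
    rw [← Matrix.mul_assoc, hC, Matrix.one_mul]
  have can4 : ∀ X : Matrix (Fin 3) (Fin 3) ℝ, Cᵀ * (C * X) = X := fun X => by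
    rw [← Matrix.mul_assoc, hC', Matrix.one_mul]
  set Δ : Matrix (Fin 3) (Fin 3) ℝ := diagonal d with hΔ
  have hΔT : Δᵀ = Δ := diagonal_transpose d
  have hDT : ∀ i : Fin 4, (Dmat i)ᵀ = Dmat i := by
    intro i; fin_cases i <;> simp [Dmat]
  have hDcomm : ∀ i : Fin 4, Dmat i * Δ = Δ * Dmat i := by
    intro i; fin_cases i <;>
      simp [Dmat, hΔ, diagonal_mul_diagonal, mul_comm]
  -- nonnegativity of d
  have hd0 : ∀ i, 0 ≤ d i := by
    have hpsd : (Uᵀ * M * U).PosSemidef := by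
      simpa using hM.conjTranspose_mul_mul_same (B := U)
    have e : Uᵀ * M * U = Δ := by
      rw [hdecomp]
      calc Uᵀ * (U * Δ * Uᵀ) * U = Uᵀ * (U * (Δ * (Uᵀ * U))) := by
            simp only [Matrix.mul_assoc]
        _ = Δ := by rw [hU', Matrix.mul_one, can2]
    rw [e, hΔ] at hpsd
    exact posSemidef_diagonal_iff.mp hpsd
  constructor
  · intro h
    have hsym : (C * M)ᵀ = C * M := by
      have h2 : C * M - (C * M)ᵀ = 0 := by
        have := congrArg (fun X => (2:ℝ) • X) h
        simpa [smul_smul] using this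
      exact (sub_eq_zero.mp h2).symm
    set B : Matrix (Fin 3) (Fin 3) ℝ := Uᵀ * C * U with hB
    have hBo : B * Bᵀ = 1 := by
      simp only [hB, transpose_mul, transpose_transpose, Matrix.mul_assoc, can1, can3, hU']
    have hBo' : Bᵀ * B = 1 := mul_eq_one_comm.mp hBo
    have can5 : ∀ X : Matrix (Fin 3) (Fin 3) ℝ, Bᵀ * (B * X) = X := fun X => by
      rw [← Matrix.mul_assoc, hBo', Matrix.one_mul]
    -- B Δ = Δ Bᵀ
    have h1 : B * Δ = Δ * Bᵀ := by
      have e1 : Uᵀ * (C * M) * U = B * Δ := by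
        rw [hdecomp, hB]
        simp only [Matrix.mul_assoc, can1, can2, hU', Matrix.mul_one]
      have e2 : Uᵀ * (C * M)ᵀ * U = Δ * Bᵀ := by
        rw [hdecomp, hB]
        simp only [transpose_mul, transpose_transpose, hΔT, Matrix.mul_assoc, can1, can2,
          hU', Matrix.mul_one]
      rw [← e1, ← e2, hsym]
    -- B commutes with Δ²
    have h2 : B * (Δ * Δ) = (Δ * Δ) * B := by
      have e3 : B * (Δ * Δ) * Bᵀ = Δ * Δ := by
        calc B * (Δ * Δ) * Bᵀ = (B * Δ) * (Δ * Bᵀ) := by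
              simp only [Matrix.mul_assoc]
          _ = (Δ * Bᵀ) * (B * Δ) := by rw [h1]
          _ = Δ * (Bᵀ * (B * Δ)) := by simp only [Matrix.mul_assoc]
          _ = Δ * Δ := by rw [can5]
      calc B * (Δ * Δ) = B * (Δ * Δ) * (Bᵀ * B) := by rw [hBo', Matrix.mul_one]
        _ = (B * (Δ * Δ) * Bᵀ) * B := by simp only [Matrix.mul_assoc]
        _ = (Δ * Δ) * B := by rw [e3]
    -- off-diagonal entries vanish
    have hoff : ∀ i j, i ≠ j → B i j = 0 := by
      intro i j hij
      have hentry := congrFun (congrFun h2 i) j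
      rw [hΔ, diagonal_mul_diagonal, mul_diagonal, diagonal_mul] at hentry
      have hdne : d j * d j ≠ d i * d i := by
        intro hsq
        exact hij (hdistinct ((mul_self_inj_of_nonneg (hd0 j) (hd0 i)).mp hsq)).symm
      have hz : B i j * (d j * d j - d i * d i) = 0 := by ring_nf; linarith [hentry]
      rcases mul_eq_zero.mp hz with h' | h'
      · exact h'
      · exact absurd (by linarith : d j * d j = d i * d i) hdne
    have hdiag : B = diagonal (fun i => B i i) := by
      ext i j
      by_cases hij : i = j
      · subst hij; simp [diagonal_apply_eq]
      · simp [diagonal_apply_ne _ hij, hoff i j hij]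
    -- diagonal entries are ±1
    have hpm : ∀ i, B i i = 1 ∨ B i i = -1 := by
      intro i
      have hbb := congrFun (congrFun hBo i) i
      rw [hdiag, diagonal_transpose, diagonal_mul_diagonal] at hbb
      simp only [diagonal_apply_eq, Pi.mul_apply, one_apply_eq] at hbb
      exact mul_self_eq_one_iff.mp hbb
    -- determinant of B is 1
    have hdetB : B.det = 1 := by
      have hUU : Uᵀ.det * U.det = 1 := by
        rw [← det_mul, hU']; exact det_one
      rw [hB, det_mul, det_mul]
      calc Uᵀ.det * C.det * U.det = C.det * (Uᵀ.det * U.det) := by ring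
        _ = 1 := by rw [hdet, hUU, one_mul]
    have hdetB' : B 0 0 * B 1 1 * B 2 2 = 1 := by
      rw [hdiag] at hdetB
      rw [det_diagonal, Fin.prod_univ_three] at hdetB
      exact hdetB
    have hCeq : C = U * B * Uᵀ := by
      rw [hB]
      simp only [Matrix.mul_assoc, can1, hU, Matrix.mul_one]
    rcases hpm 0 with h0 | h0 <;> rcases hpm 1 with h1' | h1' <;> rcases hpm 2 with h2' | h2'
    · refine ⟨0, ?_⟩
      rw [hCeq, hdiag]
      congr 2
      have hf : (fun i => B i i) = (fun _ => (1:ℝ)) := by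
        funext i; fin_cases i <;> simpa using ‹_›
      rw [hf]
      simp [Dmat]
    · rw [h0, h1', h2'] at hdetB'; norm_num at hdetB'
    · rw [h0, h1', h2'] at hdetB'; norm_num at hdetB'
    · refine ⟨1, ?_⟩
      rw [hCeq, hdiag]
      congr 2
      have hf : (fun i => B i i) = ![1, -1, -1] := by
        funext i; fin_cases i <;> simp [h0, h1', h2']
      rw [hf]; simp [Dmat]
    · rw [h0, h1', h2'] at hdetB'; norm_num at hdetB'
    · refine ⟨2, ?_⟩
      rw [hCeq, hdiag]
      congr 2
      have hf : (fun i => B i i) = ![-1, 1, -1] := by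
        funext i; fin_cases i <;> simp [h0, h1', h2']
      rw [hf]; simp [Dmat]
    · refine ⟨3, ?_⟩
      rw [hCeq, hdiag]
      congr 2
      have hf : (fun i => B i i) = ![-1, -1, 1] := by
        funext i; fin_cases i <;> simp [h0, h1', h2']
      rw [hf]; simp [Dmat]
    · rw [h0, h1', h2'] at hdetB'; norm_num at hdetB'
  · rintro ⟨i, rfl⟩
    have hCM : U * Dmat i * Uᵀ * M = U * (Dmat i * Δ) * Uᵀ := by
      rw [hdecomp]
      simp only [Matrix.mul_assoc, can1, can2]
    have key : (Dmat i * Δ)ᵀ = Dmat i * Δ := by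
      rw [transpose_mul, hΔT, hDT, ← hDcomm]
    have hsym : (U * Dmat i * Uᵀ * M)ᵀ = U * Dmat i * Uᵀ * M := by
      rw [hCM, transpose_mul, transpose_mul, transpose_transpose, key]
      simp only [Matrix.mul_assoc]
    rw [hsym]
    simp
end

section
/- Let v_1, ..., v_N be vectors in R^3, k_n > 0, M = Σ_n k_n v_n v_n^T, and C̃ ∈ SO(3). Then the vector ω_err = Σ_n k_n (v_n × C̃ v_n) satisfies (ω_err)_× = 2 Pa(C̃ M), where Pa(A) = (A - A^T)/2. -/
open Matrix

lemma crossMat_zero : crossMat 0 = 0 := by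
  ext i j; fin_cases i <;> fin_cases j <;> simp [crossMat, vecHead, vecTail]

lemma crossMat_add (x y : Fin 3 → ℝ) : crossMat (x + y) = crossMat x + crossMat y := by
  ext i j; fin_cases i <;> fin_cases j <;> simp [crossMat] <;> ring

lemma crossMat_smul (c : ℝ) (x : Fin 3 → ℝ) : crossMat (c • x) = c • crossMat x := by
  ext i j; fin_cases i <;> fin_cases j <;> simp [crossMat] <;> ring

lemma crossMat_sum {α : Type*} (s : Finset α) (f : α → (Fin 3 → ℝ)) :
    crossMat (∑ n ∈ s, f n) = ∑ n ∈ s, crossMat (f n) := by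
  induction s using Finset.cons_induction with
  | empty => simp [crossMat_zero]
  | cons a s ha ih => simp [Finset.sum_cons, crossMat_add, ih]

lemma crossMat_key_s11 (C : Matrix (Fin 3) (Fin 3) ℝ) (v : Fin 3 → ℝ) :
    crossMat (crossProduct v (C.mulVec v)) =
      C * vecMulVec v v - (C * vecMulVec v v)ᵀ := by
  ext i j
  fin_cases i <;> fin_cases j <;>
    simp [crossMat, crossProduct, vecMulVec, mul_apply, mulVec, dotProduct,
      Fin.sum_univ_three] <;> ring

theorem stmt_11 (N : ℕ) (v : Fin N → (Fin 3 → ℝ)) (k : Fin N → ℝ)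
    (hk : ∀ n, 0 < k n)
    (M : Matrix (Fin 3) (Fin 3) ℝ)
    (hM : M = ∑ n, k n • vecMulVec (v n) (v n))
    (C : Matrix (Fin 3) (Fin 3) ℝ) (hC : C * Cᵀ = 1) (hdet : C.det = 1)
    (werr : Fin 3 → ℝ)
    (hwerr : werr = ∑ n, k n • crossProduct (v n) (C.mulVec (v n))) :
    crossMat werr = (2 : ℝ) • ((1/2 : ℝ) • (C * M - (C * M)ᵀ)) := by
  subst hM hwerr
  rw [smul_smul]
  norm_num
  rw [crossMat_sum]
  rw [Matrix.transpose_sum, Matrix.mul_sum, Matrix.sum_mul, ← Finset.sum_sub_distrib]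
  refine Finset.sum_congr rfl fun n _ => ?_
  rw [crossMat_smul, crossMat_key_s11, transpose_mul, mul_smul_comm, transpose_smul,
    smul_mul_assoc, smul_sub]
end

section
/- Suppose symmetric positive definite 3×3 matrices P_a, P_b and a matrix P_c satisfy P_a P_b^{-1} + P_b^{-1} P_a = -σ_ω^2 σ_b^{-2} I + P_b^2 and P_c = -σ_b^2 P_a P_b^{-1}, where σ_ω, σ_b > 0. Then P_a and P_b commute (are simultaneously diagonalizable) and P_c is symmetric negative definite. -/
/-!
Write `B = Pb⁻¹`. The right-hand side `Q` of `Pa B + B Pa = Q` is a polynomial in `Pb`, so it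
commutes with `B`, and then `Z = B Pa - Pa B` solves the Lyapunov equation `Z B + B Z = 0`.
For strictly positive `B` this forces `Z = 0`: such a `Z` commutes with `B²`, hence with its
square root `B`, so `2 B Z = 0`. Thus `Pa` commutes with `B` and with `Pb`, and `-Pc = σb² Pa B`
is a product of commuting positive definite matrices, hence symmetric positive definite.
-/

open Matrix

section StrictlyPositive

variable {A : Type*} [Ring A] [PartialOrder A] [StarRing A] [StarOrderedRing A] [TopologicalSpace A]
  [Algebra ℝ A] [ContinuousFunctionalCalculus ℝ A IsSelfAdjoint] [NonnegSpectrumClass ℝ A]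
  [IsTopologicalRing A] [T2Space A]

theorem IsStrictlyPositive.eq_zero_of_mul_add_mul_eq_zero {a z : A} (ha : IsStrictlyPositive a)
    (hz : z * a + a * z = 0) : z = 0 := by
  have hsq : Commute (a * a) z := by
    calc a * a * z = a * -(z * a) := by rw [mul_assoc, eq_neg_of_add_eq_zero_right hz]
      _ = -(a * z) * a := by noncomm_ring
      _ = z * (a * a) := by rw [← eq_neg_of_add_eq_zero_left hz, mul_assoc]
  have hPaPbinv : Commute a z := by
    have h := hsq.cfcₙ_nnreal NNReal.sqrt
    change Commute (CFC.sqrt (a * a)) z at h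
    rwa [CFC.sqrt_mul_self a ha.nonneg] at h
  have htwo : (2 : ℝ) • (a * z) = 0 := by rw [two_smul, ← hz, hPaPbinv.eq]
  exact ha.isUnit.mul_right_eq_zero.mp <| (smul_eq_zero.mp htwo).resolve_left two_ne_zero

theorem IsStrictlyPositive.commute_of_mul_add_mul_eq {a x q : A} (ha : IsStrictlyPositive a)
    (hq : Commute a q) (hx : x * a + a * x = q) : Commute x a := by
  refine (sub_eq_zero.mp <| ha.eq_zero_of_mul_add_mul_eq_zero (z := a * x - x * a) ?_).symm
  calc (a * x - x * a) * a + a * (a * x - x * a) = a * (x * a + a * x) - (x * a + a * x) * a := by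
        noncomm_ring
    _ = 0 := by rw [hx, hq.eq, sub_self]

end StrictlyPositive

protected theorem Commute.nonsing_inv_right {n K : Type*} [Fintype n] [DecidableEq n] [CommRing K]
    {A B : Matrix n n K} (h : Commute A B) : Commute A B⁻¹ := by
  by_cases hB : IsUnit B
  · lift B to (Matrix n n K)ˣ using hB
    rw [← coe_units_inv]
    exact h.units_inv_right
  · rw [nonsing_inv_eq_ringInverse, Ring.inverse_non_unit _ hB]
    exact Commute.zero_right A

theorem stmt_16_general (Pa Pb Pc : Matrix (Fin 3) (Fin 3) ℝ)
    (hPa : Pa.PosDef) (hPaSymm : Paᵀ = Pa)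
    (hPb : Pb.PosDef) (hPbSymm : Pbᵀ = Pb)
    (σω σb : ℝ) (hσb : 0 < σb)
    (hRic : Pa * Pb⁻¹ + Pb⁻¹ * Pa
      = (-(σω ^ 2 / σb ^ 2)) • (1 : Matrix (Fin 3) (Fin 3) ℝ) + Pb ^ 2)
    (hPc : Pc = (-(σb ^ 2)) • (Pa * Pb⁻¹)) :
    Pa * Pb = Pb * Pa ∧ Pcᵀ = Pc ∧ (-Pc).PosDef := by
  have hQ : Commute Pb⁻¹ ((-(σω ^ 2 / σb ^ 2)) • (1 : Matrix (Fin 3) (Fin 3) ℝ) + Pb ^ 2) :=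
    .symm <| Commute.nonsing_inv_right <|
      ((Commute.one_left Pb).smul_left _).add_left ((Commute.refl Pb).pow_left 2)
  have hPaPbinv : Commute Pa Pb⁻¹ := by
    open scoped MatrixOrder in
    exact hPb.inv.isStrictlyPositive.commute_of_mul_add_mul_eq hQ hRic
  have hPaPb : Commute Pa Pb := by
    simpa only [nonsing_inv_nonsing_inv Pb hPb.det_pos.ne'.isUnit] using hPaPbinv.nonsing_inv_right
  have hPos : (Pa * Pb⁻¹).PosDef := by
    open scoped MatrixOrder in
    exact ((hPa.isStrictlyPositive.commute_iff hPb.inv.isStrictlyPositive).mp hPaPbinv).posDef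
  refine ⟨hPaPb.eq, ?_, ?_⟩
  · rw [hPc, transpose_smul, transpose_mul, transpose_nonsing_inv, hPbSymm, hPaSymm, hPaPbinv.eq]
  · rw [hPc, neg_smul, neg_neg]
    exact hPos.smul (pow_pos hσb 2)

theorem stmt_16 (Pa Pb Pc : Matrix (Fin 3) (Fin 3) ℝ)
    (hPa : Pa.PosDef) (hPaSymm : Paᵀ = Pa)
    (hPb : Pb.PosDef) (hPbSymm : Pbᵀ = Pb)
    (σω σb : ℝ) (hσω : 0 < σω) (hσb : 0 < σb)
    (hRic : Pa * Pb⁻¹ + Pb⁻¹ * Pa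
      = (-(σω ^ 2 / σb ^ 2)) • (1 : Matrix (Fin 3) (Fin 3) ℝ) + Pb ^ 2)
    (hPc : Pc = (-(σb ^ 2)) • (Pa * Pb⁻¹)) :
    Pa * Pb = Pb * Pa ∧ Pcᵀ = Pc ∧ (-Pc).PosDef :=
  stmt_16_general Pa Pb Pc hPa hPaSymm hPb hPbSymm σω σb hσb hRic hPc
end

section
/- Let A, B, C, D be 3×3 real matrices with A symmetric positive definite and D symmetric. The block matrix [[A, B],[C, D]] (with C = B^T) is positive definite if and only if D - B^T A^{-1} B is positive definite (Schur complement criterion), and consequently, for the matrix Q = [[2 A_0 (K_P - α K_I) A_0, -α(A_0 K_P A_0 - A_0 ω_×)], [-α(A_0 K_P A_0 + ω_× A_0), 2α A_0]] with A_0, K_P, K_I symmetric positive definite and ω ∈ R^3 fixed, there exists α > 0 small enough that Q + Q^T is positive definite. -/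
/-!
A Hermitian block matrix with positive definite corner is positive definite iff it is positive
semidefinite and invertible; Mathlib's semidefinite Schur complement criterion and the determinant
formula `det = det A * det (D - Bᴴ A⁻¹ B)` turn both conditions into the same conditions on the
Schur complement.

For `Q + Qᵀ`, take the Schur complement with respect to the lower-right corner `4α A₀`. All blocks
except the leading `4 A₀ K_P A₀` are of order `α`, so the complement is `4 A₀ K_P A₀ - α T` for a
fixed symmetric `T`, which stays positive definite for small `α` because `4 A₀ K_P A₀ ≥ r • 1`
for some `r > 0` while `T ≤ c • 1` for some `c`.
-/

open Matrix

open scoped ComplexOrder MatrixOrder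

namespace Matrix

variable {m n 𝕜 : Type*} [Fintype m] [Fintype n] [DecidableEq m] [DecidableEq n] [RCLike 𝕜]

theorem posDef_fromBlocks₁₁_iff {A : Matrix m m 𝕜} (B : Matrix m n 𝕜) (D : Matrix n n 𝕜)
    (hA : A.PosDef) :
    (fromBlocks A B Bᴴ D).PosDef ↔ (D - Bᴴ * A⁻¹ * B).PosDef := by
  let := hA.isUnit.invertible
  have hdet : (fromBlocks A B Bᴴ D).det = A.det * (D - Bᴴ * A⁻¹ * B).det := by
    rw [det_fromBlocks₁₁, invOf_eq_nonsing_inv]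
  have hsemi := PosDef.fromBlocks₁₁ B D hA
  refine ⟨fun h => (hsemi.mp h.posSemidef).posDef_iff_det_ne_zero.mpr ?_,
    fun h => (hsemi.mpr h.posSemidef).posDef_iff_det_ne_zero.mpr ?_⟩
  · exact right_ne_zero_of_mul (hdet ▸ h.det_pos.ne')
  · exact hdet ▸ mul_ne_zero hA.det_pos.ne' h.det_pos.ne'

theorem posDef_fromBlocks₂₂_iff (A : Matrix m m 𝕜) (B : Matrix m n 𝕜) {D : Matrix n n 𝕜}
    (hD : D.PosDef) :
    (fromBlocks A B Bᴴ D).PosDef ↔ (A - B * D⁻¹ * Bᴴ).PosDef := by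
  let := hD.isUnit.invertible
  have hdet : (fromBlocks A B Bᴴ D).det = D.det * (A - B * D⁻¹ * Bᴴ).det := by
    rw [det_fromBlocks₂₂, invOf_eq_nonsing_inv]
  have hsemi := PosDef.fromBlocks₂₂ A B hD
  refine ⟨fun h => (hsemi.mp h.posSemidef).posDef_iff_det_ne_zero.mpr ?_,
    fun h => (hsemi.mpr h.posSemidef).posDef_iff_det_ne_zero.mpr ?_⟩
  · exact right_ne_zero_of_mul (hdet ▸ h.det_pos.ne')
  · exact hdet ▸ mul_ne_zero hD.det_pos.ne' h.det_pos.ne'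

theorem PosDef.mul_mul_of_isHermitian {K A : Matrix n n 𝕜} (hK : K.PosDef) (hA : A.IsHermitian)
    (hAu : IsUnit A) : (A * K * A).PosDef := by
  simpa [star_eq_conjTranspose, hA.eq] using (IsUnit.posDef_star_left_conjugate_iff hAu).mpr hK

theorem PosDef.exists_pos_posSemidef_sub_smul_one {S : Matrix n n 𝕜} (hS : S.PosDef) :
    ∃ r > (0 : ℝ), (S - r • 1).PosSemidef := by
  cases subsingleton_or_nontrivial (Matrix n n 𝕜)
  · exact ⟨1, one_pos, by rw [Subsingleton.elim (S - _) 0]; exact .zero⟩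
  obtain ⟨r, hr, hrS⟩ := (CFC.exists_pos_algebraMap_le_iff hS.isHermitian.isSelfAdjoint).2
    fun x hx ↦ hS.isStrictlyPositive.spectrum_pos hx
  rw [Algebra.algebraMap_eq_smul_one, Matrix.le_iff] at hrS
  exact ⟨r, hr, hrS⟩

theorem IsHermitian.exists_posSemidef_smul_one_sub {T : Matrix n n 𝕜} (hT : T.IsHermitian) :
    ∃ c : ℝ, (c • 1 - T).PosSemidef := by
  obtain ⟨c, hc⟩ := (ContinuousFunctionalCalculus.isCompact_spectrum (R := ℝ)
    (p := IsSelfAdjoint) T).bddAbove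
  have hTc : T ≤ algebraMap ℝ _ c :=
    le_algebraMap_of_spectrum_le (fun x hx => hc hx) hT.isSelfAdjoint
  rw [Algebra.algebraMap_eq_smul_one, Matrix.le_iff] at hTc
  exact ⟨c, hTc⟩

theorem PosDef.exists_pos_posDef_sub_smul {S T : Matrix n n 𝕜} (hS : S.PosDef)
    (hT : T.IsHermitian) : ∃ t > (0 : ℝ), (S - t • T).PosDef := by
  obtain ⟨r, hr, hSr⟩ := hS.exists_pos_posSemidef_sub_smul_one
  obtain ⟨c, hTc⟩ := hT.exists_posSemidef_smul_one_sub
  set t := r / (|c| + 1)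
  have ht : 0 < t := by positivity
  have hrt : 0 < r - t * c := by
    have : t * (|c| + 1) = r := div_mul_cancel₀ r (by positivity)
    nlinarith [le_abs_self c]
  have hsplit : S - t • T = (S - r • 1) + t • (c • 1 - T) + (r - t * c) • (1 : Matrix n n 𝕜) := by
    module
  exact ⟨t, ht, hsplit ▸ PosDef.posSemidef_add (hSr.add (hTc.smul ht.le)) (PosDef.one.smul hrt)⟩

theorem inv_real_smul {D : Matrix n n 𝕜} (hD : IsUnit D) {a : ℝ} (ha : a ≠ 0) :
    (a • D)⁻¹ = a⁻¹ • D⁻¹ := by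
  refine inv_eq_right_inv ?_
  rw [smul_mul_smul_comm, mul_inv_cancel₀ ha, mul_nonsing_inv _ ((isUnit_iff_isUnit_det D).mp hD),
    one_smul]

theorem exists_pos_posDef_fromBlocks_sub_smul {S K : Matrix m m 𝕜} {D : Matrix n n 𝕜}
    (hS : S.PosDef) (hK : K.IsHermitian) (hD : D.PosDef) (B : Matrix m n 𝕜) :
    ∃ α > (0 : ℝ), (fromBlocks (S - α • K) (α • B) (α • Bᴴ) (α • D)).PosDef := by
  have hT : (K + B * D⁻¹ * Bᴴ).IsHermitian :=
    hK.add (isHermitian_mul_mul_conjTranspose B hD.inv.isHermitian)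
  obtain ⟨α, hα, hST⟩ := hS.exists_pos_posDef_sub_smul hT
  have hschur : S - α • K - α • B * (α • D)⁻¹ * (α • Bᴴ) = S - α • (K + B * D⁻¹ * Bᴴ) := by
    rw [inv_real_smul hD.isUnit hα.ne']
    simp only [Matrix.smul_mul, Matrix.mul_smul, smul_smul]
    match_scalars <;> field_simp
  have hBα : (α • B)ᴴ = α • Bᴴ := by rw [conjTranspose_smul, star_trivial]
  refine ⟨α, hα, ?_⟩
  rw [← hBα, posDef_fromBlocks₂₂_iff _ _ (hD.smul hα), hBα, hschur]
  exact hST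

end Matrix

theorem crossMat_transpose (x : Fin 3 → ℝ) : (crossMat x)ᵀ = -crossMat x := by
  ext i j
  fin_cases i <;> fin_cases j <;> simp [crossMat]

noncomputable def lyapunovMatrix (A0 KP KI : Matrix (Fin 3) (Fin 3) ℝ) (ω : Fin 3 → ℝ) (α : ℝ) :
    Matrix (Fin 3 ⊕ Fin 3) (Fin 3 ⊕ Fin 3) ℝ :=
  fromBlocks ((2 : ℝ) • (A0 * (KP - α • KI) * A0))
    (-(α • (A0 * KP * A0 - A0 * crossMat ω)))
    (-(α • (A0 * KP * A0 + crossMat ω * A0)))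
    ((2 * α) • A0)

theorem lyapunovMatrix_add_transpose {A0 KP KI : Matrix (Fin 3) (Fin 3) ℝ} (ω : Fin 3 → ℝ)
    (α : ℝ) (hA0 : A0ᵀ = A0) (hKP : KPᵀ = KP) (hKI : KIᵀ = KI) :
    lyapunovMatrix A0 KP KI ω α + (lyapunovMatrix A0 KP KI ω α)ᵀ =
      fromBlocks ((4 : ℝ) • (A0 * KP * A0) - α • ((4 : ℝ) • (A0 * KI * A0)))
        (α • ((-2 : ℝ) • (A0 * KP * A0 - A0 * crossMat ω)))
        (α • ((-2 : ℝ) • (A0 * KP * A0 - A0 * crossMat ω))ᴴ) (α • ((4 : ℝ) • A0)) := by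
  rw [lyapunovMatrix, fromBlocks_transpose, fromBlocks_add, conjTranspose_eq_transpose_of_trivial]
  simp only [transpose_smul, transpose_neg, transpose_add, transpose_sub, transpose_mul, hA0, hKP,
    hKI, crossMat_transpose, Matrix.mul_sub, Matrix.sub_mul, Matrix.mul_smul, Matrix.smul_mul,
    Matrix.mul_assoc, Matrix.mul_neg, Matrix.neg_mul]
  congr 1 <;> module

theorem stmt_18 :
    -- Schur complement criterion
    (∀ A B D : Matrix (Fin 3) (Fin 3) ℝ, A.PosDef → Aᵀ = A → Dᵀ = D →
      ((fromBlocks A B Bᵀ D).PosDef ↔ (D - Bᵀ * A⁻¹ * B).PosDef)) ∧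
    -- consequence for the Lyapunov-derivative matrix Q
    (∀ A0 KP KI : Matrix (Fin 3) (Fin 3) ℝ, ∀ ω : Fin 3 → ℝ,
      A0.PosDef → A0ᵀ = A0 → KP.PosDef → KPᵀ = KP → KI.PosDef → KIᵀ = KI →
      ∃ α : ℝ, 0 < α ∧
        (let Q : Matrix (Fin 3 ⊕ Fin 3) (Fin 3 ⊕ Fin 3) ℝ :=
          fromBlocks ((2 : ℝ) • (A0 * (KP - α • KI) * A0))
            (-(α • (A0 * KP * A0 - A0 * crossMat ω)))
            (-(α • (A0 * KP * A0 + crossMat ω * A0)))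
            ((2 * α) • A0);
        (Q + Qᵀ).PosDef)) := by
  refine ⟨fun A B D hA _ _ => ?_, fun A0 KP KI ω hA0 hA0s hKP hKPs hKI hKIs => ?_⟩
  · rw [← conjTranspose_eq_transpose_of_trivial]
    exact posDef_fromBlocks₁₁_iff B D hA
  · have hS := (hKP.mul_mul_of_isHermitian hA0.isHermitian hA0.isUnit).smul (four_pos (α := ℝ))
    have hK := (hKI.mul_mul_of_isHermitian hA0.isHermitian hA0.isUnit).smul (four_pos (α := ℝ))
    obtain ⟨α, hα, hQ⟩ := exists_pos_posDef_fromBlocks_sub_smul hS hK.isHermitian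
      (hA0.smul (four_pos (α := ℝ))) ((-2 : ℝ) • (A0 * KP * A0 - A0 * crossMat ω))
    refine ⟨α, hα, ?_⟩
    change (lyapunovMatrix A0 KP KI ω α + (lyapunovMatrix A0 KP KI ω α)ᵀ).PosDef
    rwa [lyapunovMatrix_add_transpose ω α hA0s hKPs hKIs]
end
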